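/- arXiv:2507.18953 — 2 statements merged into one kernel-verified Lean document; each statement's English description precedes it below -/
import Mathlib

section
/- Fix a prime p, and let F be a subfield of the field ℚ_p of p-adic numbers. Let f : F → F be an SD map that is continuous (with respect to the topology on F induced from ℚ_p). Then f is the identity map: f(x) = x for all x in F. -/
/-- A function `f : F → F` on a field `F` is an *SD map* if for all `x ≠ y` one has
`f x ≠ f y` and `f ((x+y)/(x-y)) = (f x + f y) / (f x - f y)`. -/
def IsSDMap {F : Type*} [Field F] (f : F → F) : Prop :=
  ∀ ⦃x y : F⦄, x ≠ y →
    f x ≠ f y ∧ f ((x + y) / (x - y)) = (f x + f y) / (f x - f y)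

/-!
An SD map `f` fixes `0` and `1`, is odd, and satisfies `f (u / v) = f u / f v`. The SD identity
at `(2, 1)`, `(3, 2)` and `(4, 1)` gives two expressions for `f 5 / f 3` in terms of `a = f 2`,
which force `a = 2`; at `(n + 1, 1)` it then propagates `f n = n` to all natural numbers, hence
`f` fixes `ℚ`. Being continuous and fixing the dense subset `ℚ` of `F`, `f` is the identity.
-/

theorem Subfield.denseRange_ratCast {K : Type*} [Field K] [TopologicalSpace K]
    (F : Subfield K) (hK : DenseRange ((↑) : ℚ → K)) : DenseRange ((↑) : ℚ → F) := by
  rw [DenseRange, Subtype.dense_iff, ← Set.range_comp]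
  exact fun x _ => hK x

namespace IsSDMap

variable {K : Type*} [Field K] {f : K → K}

theorem ne (hf : IsSDMap f) {x y : K} (h : x ≠ y) : f x ≠ f y := (hf h).1

theorem map_add_div_sub (hf : IsSDMap f) {x y : K} (h : x ≠ y) :
    f ((x + y) / (x - y)) = (f x + f y) / (f x - f y) := (hf h).2

theorem map_one_sub_one_mul_eq (hf : IsSDMap f) {x : K} (hx : x ≠ 0) :
    (f 1 - 1) * f x = (f 1 + 1) * f 0 := by
  have h := hf.map_add_div_sub hx
  rw [add_zero, sub_zero, div_self hx, eq_div_iff (sub_ne_zero.2 (hf.ne hx))] at h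
  linear_combination h

variable [CharZero K]

theorem map_one (hf : IsSDMap f) : f 1 = 1 := by
  have h : (f 1 - 1) * (f 1 - f (-1)) = 0 := by
    linear_combination hf.map_one_sub_one_mul_eq one_ne_zero -
      hf.map_one_sub_one_mul_eq (neg_ne_zero.2 one_ne_zero)
  have h₁ : f 1 - f (-1) ≠ 0 := sub_ne_zero.2 (hf.ne (by norm_num))
  exact sub_eq_zero.1 ((mul_eq_zero.1 h).resolve_right h₁)

theorem map_zero (hf : IsSDMap f) : f 0 = 0 := by
  have h := hf.map_one_sub_one_mul_eq one_ne_zero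
  rw [hf.map_one] at h
  linear_combination -h / 2

theorem map_ne_zero (hf : IsSDMap f) {x : K} (hx : x ≠ 0) : f x ≠ 0 :=
  hf.map_zero ▸ hf.ne hx

theorem map_neg (hf : IsSDMap f) (x : K) : f (-x) = -f x := by
  rcases eq_or_ne x 0 with rfl | hx
  · simp [hf.map_zero]
  have hne : x ≠ -x := fun h => hx (by linear_combination h / 2)
  have h := hf.map_add_div_sub hne
  rw [add_neg_cancel, zero_div, hf.map_zero, eq_comm,
    div_eq_zero_iff, or_iff_left (sub_ne_zero.2 (hf.ne hne))] at h
  linear_combination h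

theorem map_div (hf : IsSDMap f) (u : K) {v : K} (hv : v ≠ 0) : f (u / v) = f u / f v := by
  rcases eq_or_ne u v with rfl | huv
  · rw [div_self hv, div_self (hf.map_ne_zero hv), hf.map_one]
  -- The SD identity at `(u / v, 1)` and at `(u, v)` evaluates `f` at the same point, and
  -- `t ↦ (t + 1) / (t - 1)` is injective.
  have ht : u / v ≠ 1 := fun h => huv ((div_eq_one_iff_eq hv).1 h)
  have h := hf.map_add_div_sub ht
  rw [show (u / v + 1) / (u / v - 1) = (u + v) / (u - v) by
      field_simp [sub_ne_zero.2 huv], hf.map_add_div_sub huv, hf.map_one,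
    div_eq_div_iff (sub_ne_zero.2 (hf.ne huv)) (sub_ne_zero.2 (hf.map_one ▸ hf.ne ht))] at h
  rw [eq_div_iff (hf.map_ne_zero hv)]
  linear_combination h / 2

theorem map_two (hf : IsSDMap f) : f 2 = 2 := by
  have h₂₁ : f 2 - 1 ≠ 0 := sub_ne_zero.2 (hf.map_one ▸ hf.ne (by norm_num))
  have h₃₂ : f 3 - f 2 ≠ 0 := sub_ne_zero.2 (hf.ne (by norm_num))
  have h₄₁ : f 4 - 1 ≠ 0 := sub_ne_zero.2 (hf.map_one ▸ hf.ne (by norm_num))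
  have h₃ := hf.map_add_div_sub (show (2 : K) ≠ 1 by norm_num)
  have h₄ := hf.map_div 4 (show (2 : K) ≠ 0 by norm_num)
  have h₅ := hf.map_add_div_sub (show (3 : K) ≠ 2 by norm_num)
  have h₅₃ := hf.map_add_div_sub (show (4 : K) ≠ 1 by norm_num)
  norm_num [hf.map_one, hf.map_div 5 (show (3 : K) ≠ 0 by norm_num)] at h₃ h₄ h₅ h₅₃
  rw [eq_div_iff h₂₁] at h₃
  rw [eq_div_iff (hf.map_ne_zero two_ne_zero)] at h₄
  rw [eq_div_iff h₃₂] at h₅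
  rw [div_eq_div_iff (hf.map_ne_zero (by norm_num)) h₄₁] at h₅₃
  set a := f 2
  set b := f 3
  -- Eliminating `f 5` and `f 4` gives `(b + a) (a² - 1) = b (b - a) (a² + 1)`; multiplying by
  -- `(a - 1)²` and substituting `b (a - 1) = a + 1` leaves a polynomial in `a` alone.
  have key : (2 * a * (a ^ 2 + 1) * (a + 1)) * (a - 2) = 0 := by
    linear_combination
      (a - 1) ^ 2 * (-(f 4 - 1) * h₅ + (b - a) * h₅₃ + (b + a - b * (b - a)) * h₄) -
        ((a ^ 2 - 1) * (a - 1) - (a ^ 2 + 1) * (b * (a - 1) + a + 1 - a ^ 2 + a)) * h₃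
  have hm1 : f (-1) = -1 := by rw [hf.map_neg, hf.map_one]
  have ha₀ : a ≠ 0 := hf.map_ne_zero two_ne_zero
  have ha₁ : a + 1 ≠ 0 := fun h =>
    hf.ne (show (2 : K) ≠ -1 by norm_num) (by linear_combination h - hm1)
  have ha₂ : a ^ 2 + 1 ≠ 0 := fun h =>
    hf.ne (show (4 : K) ≠ -1 by norm_num) (by linear_combination h - hm1 - h₄)
  have hne : 2 * a * (a ^ 2 + 1) * (a + 1) ≠ 0 :=
    mul_ne_zero (mul_ne_zero (mul_ne_zero two_ne_zero ha₀) ha₂) ha₁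
  exact sub_eq_zero.1 ((mul_eq_zero.1 key).resolve_left hne)

theorem map_natCast (hf : IsSDMap f) (n : ℕ) : f n = n := by
  induction n using Nat.twoStepInduction with
  | zero => simpa using hf.map_zero
  | one => simpa using hf.map_one
  | more n ihn ihn₁ =>
    rcases n.eq_zero_or_pos with rfl | hn
    · simpa using hf.map_two
    have hn₀ : (n : K) ≠ 0 := Nat.cast_ne_zero.2 hn.ne'
    have h := hf.map_add_div_sub (show ((n + 1 : ℕ) : K) ≠ 1 by simpa using hn₀)
    rw [ihn₁, hf.map_one, show ((n + 1 : ℕ) : K) - 1 = n by push_cast; ring,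
      show ((n + 1 : ℕ) : K) + 1 = (n + 2 : ℕ) by push_cast; ring, hf.map_div _ hn₀, ihn] at h
    exact (div_left_inj' hn₀).1 h

theorem map_intCast (hf : IsSDMap f) (n : ℤ) : f n = n := by
  obtain ⟨m, rfl | rfl⟩ := n.eq_nat_or_neg <;> simp [hf.map_neg, hf.map_natCast]

theorem map_ratCast (hf : IsSDMap f) (q : ℚ) : f q = q := by
  rw [Rat.cast_def, hf.map_div _ (Nat.cast_ne_zero.2 q.den_nz), hf.map_intCast, hf.map_natCast]

theorem eq_id_of_continuous [TopologicalSpace K] [T2Space K] (hf : IsSDMap f)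
    (hcont : Continuous f) (hℚ : DenseRange ((↑) : ℚ → K)) : f = id :=
  hℚ.equalizer hcont continuous_id (funext hf.map_ratCast)

end IsSDMap

theorem continuous_sd_map_padic_subfield_eq_id (p : ℕ) [Fact p.Prime]
    (F : Subfield ℚ_[p]) (f : F → F) (hf : IsSDMap f) (hcont : Continuous f) :
    ∀ x : F, f x = x :=
  congrFun (hf.eq_id_of_continuous hcont (F.denseRange_ratCast (Padic.denseRange_ratCast p)))
end

section
/- Let f : ℂ → ℂ be a continuous SD map. Then either f is the identity map (f(z) = z for all z ∈ ℂ) or f is complex conjugation (f(z) = z̄ for all z ∈ ℂ). -/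
open Complex Filter Topology

lemma sd_zero_one {f : ℂ → ℂ} (hf : IsSDMap f) : f 0 = 0 ∧ f 1 = 1 := by
  have h10 := hf (show (1:ℂ) ≠ 0 by norm_num)
  have h20 := hf (show (2:ℂ) ≠ 0 by norm_num)
  have h12 := (hf (show (1:ℂ) ≠ 2 by norm_num)).1
  obtain ⟨hne1, heq1⟩ := h10
  obtain ⟨hne2, heq2⟩ := h20
  norm_num at heq1 heq2
  have e1 : f 1 * (f 1 - f 0) = f 1 + f 0 :=
    ((div_eq_iff (sub_ne_zero.2 hne1)).1 heq1.symm).symm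
  have e2 : f 1 * (f 2 - f 0) = f 2 + f 0 :=
    ((div_eq_iff (sub_ne_zero.2 hne2)).1 heq2.symm).symm
  have hfact : (f 1 - 1) * (f 1 - f 2) = 0 := by linear_combination e1 - e2
  have h1 : f 1 = 1 := by
    rcases mul_eq_zero.1 hfact with h | h
    · linear_combination h
    · exact absurd (by linear_combination h) h12
  have h0 : f 0 = 0 := by
    rw [h1] at e1; linear_combination (-1/2 : ℂ) * e1
  exact ⟨h0, h1⟩

lemma sd_neg {f : ℂ → ℂ} (hf : IsSDMap f) : ∀ x : ℂ, f (-x) = - f x := by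
  obtain ⟨h0, h1⟩ := sd_zero_one hf
  intro x
  by_cases hx : x = 0
  · rw [hx, neg_zero, h0, neg_zero]
  · have hxy : x ≠ -x := by
      intro h; apply hx
      have : (2:ℂ) * x = 0 := by linear_combination h
      simpa using this
    obtain ⟨hne, heq⟩ := hf hxy
    have harg : (x + -x) / (x - -x) = 0 := by simp
    rw [harg, h0] at heq
    rcases div_eq_zero_iff.1 heq.symm with h | h
    · linear_combination h
    · exact absurd h (sub_ne_zero.2 hne)

lemma sd_I_sq {f : ℂ → ℂ} (hf : IsSDMap f) : f Complex.I * f Complex.I = -1 := by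
  obtain ⟨h0, h1⟩ := sd_zero_one hf
  have hI1 : Complex.I ≠ 1 := by
    intro h; simpa using congrArg Complex.im h
  obtain ⟨hne, heq⟩ := hf hI1
  rw [h1] at hne heq
  have harg : (Complex.I + 1) / (Complex.I - 1) = -Complex.I := by
    rw [div_eq_iff (sub_ne_zero.2 hI1)]
    linear_combination Complex.I_sq
  rw [harg, sd_neg hf] at heq
  have := (div_eq_iff (sub_ne_zero.2 hne)).1 heq.symm
  linear_combination this


lemma sd_id {f : ℂ → ℂ} (hf : IsSDMap f) (hcont : Continuous f)
    (hfi : f Complex.I = Complex.I) : ∀ z : ℂ, f z = z := by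
  obtain ⟨h0, h1⟩ := sd_zero_one hf
  have hneg : ∀ x : ℂ, f (-x) = - f x := sd_neg hf
  have hFE : ∀ ⦃x y : ℂ⦄, x ≠ y → f ((x+y)/(x-y)) = (f x + f y)/(f x - f y) :=
    fun x y h => (hf h).2
  have hne : ∀ {x y : ℂ}, x ≠ y → f x ≠ f y := fun h => (hf h).1
  have hne0 : ∀ {x : ℂ}, x ≠ 0 → f x ≠ 0 := by
    intro x hx; have := hne hx; rwa [h0] at this
  -- quotient rule
  have hquot : ∀ x y : ℂ, y ≠ 0 → x ≠ y → f (x / y) = f x / f y := by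
    intro x y hy hxy
    have hsub : x - y ≠ 0 := sub_ne_zero.2 hxy
    have hxy1 : x / y ≠ 1 := fun h => hxy ((div_eq_one_iff_eq hy).1 h)
    have h2 := (hf hxy1).2
    have hne2 := (hf hxy1).1
    rw [h1] at h2 hne2
    have harg : (x / y + 1) / (x / y - 1) = (x + y) / (x - y) := by
      field_simp
    rw [harg, (hf hxy).2] at h2
    have hfy : f y ≠ 0 := hne0 hy
    have hcross := (div_eq_div_iff (sub_ne_zero.2 hne2) (sub_ne_zero.2 (hne hxy))).1 h2.symm
    rw [eq_div_iff hfy]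
    linear_combination (-1/2 : ℂ) * hcross
  -- multiplicativity
  have hmul : ∀ a b : ℂ, f (a * b) = f a * f b := by
    intro a b
    by_cases hb : b = 0
    · simp [hb, h0]
    by_cases ha : a = 1
    · simp [ha, h1]
    have hab : a * b ≠ b := by
      intro h; exact ha (mul_right_cancel₀ hb (h.trans (one_mul b).symm))
    have := hquot (a * b) b hb hab
    rw [mul_div_cancel_right₀ _ hb] at this
    rw [eq_div_iff (hne0 hb)] at this
    exact this.symm
  -- step relation
  have hstep : ∀ x : ℂ, x ≠ 1 → x ≠ -1 →
      f (x + 1) * (f x - 1) = (f x + 1) * f (x - 1) := by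
    intro x hx1 hxm1
    have hx1' : x - 1 ≠ 0 := sub_ne_zero.2 hx1
    have hnexy : x + 1 ≠ x - 1 := by
      intro h
      have : (2:ℂ) = 0 := by linear_combination h
      norm_num at this
    have hq := hquot (x + 1) (x - 1) hx1' hnexy
    have h2 := (hf hx1).2
    rw [h1] at h2
    rw [hq] at h2
    have hfx1 : f x - 1 ≠ 0 := by
      rw [← h1]; exact sub_ne_zero.2 (hne hx1)
    have hfxm : f (x - 1) ≠ 0 := hne0 hx1'
    exact (div_eq_div_iff hfxm hfx1).1 h2
  have hf2 : f 2 = 2 := by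
    -- now numerics
    have hneg1 : f (-1) = -1 := by rw [hneg, h1]
    have hc0 : f 2 ≠ 0 := hne0 (by norm_num)
    have hcm1 : f 2 ≠ -1 := by
      have := hne (show (2:ℂ) ≠ -1 by norm_num); rwa [hneg1] at this
    have hf5 : f 5 ≠ 0 := hne0 (by norm_num)
    have E1 := hstep 2 (by norm_num) (by norm_num)
    norm_num [h1] at E1
    -- E1 : f 3 * (f 2 - 1) = f 2 + 1
    have hf4 : f 4 = f 2 * f 2 := by
      have := hmul 2 2; norm_num at this; exact this
    have E3 := hstep 4 (by norm_num) (by norm_num)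
    norm_num [hf4] at E3
    -- E3 : f 5 * (f 2 * f 2 - 1) = (f 2 * f 2 + 1) * f 3
    have h32 := hf (show (3:ℂ) ≠ 2 by norm_num)
    have E4 := h32.2
    norm_num at E4
    -- E4 : f 5 = (f 3 + f 2)/(f 3 - f 2)
    have E4' : f 5 * (f 3 - f 2) = f 3 + f 2 :=
      (eq_div_iff (sub_ne_zero.2 h32.1)).1 E4
    have hstar : f 5 * (1 + 2 * f 2 - f 2 ^ 2) = f 2 ^ 2 + 1 := by
      linear_combination (f 2 - 1) * E4' - (f 5 - 1) * E1
    have hstar2 : (f 2 + 1) * (f 5 * (f 2 - 1) ^ 2 - (f 2 ^ 2 + 1)) = 0 := by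
      linear_combination (f 2 - 1) * E3 + (f 2 ^ 2 + 1) * E1
    have hstar2' : f 5 * (f 2 - 1) ^ 2 = f 2 ^ 2 + 1 := by
      rcases mul_eq_zero.1 hstar2 with h | h
      · exact absurd (by linear_combination h) hcm1
      · linear_combination h
    have key : f 5 * (f 2 * (f 2 - 2)) * 2 = 0 := by
      linear_combination hstar2' - hstar
    by_contra h2ne
    exact (mul_ne_zero (mul_ne_zero hf5 (mul_ne_zero hc0 (sub_ne_zero.2 h2ne)))
      two_ne_zero) key
  -- extension to ℚ, ℝ and the square identity
  have hrs : (∀ r : ℝ, f r = r) ∧ (∀ z : ℂ, f z * f z = z * z) := by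
    -- natural numbers
    have hnat : ∀ n : ℕ, f n = n ∧ f (n + 1) = n + 1 := by
      intro n
      induction n with
      | zero => constructor <;> simp [h0, h1]
      | succ n ih =>
        constructor
        · push_cast; exact ih.2
        rcases Nat.eq_zero_or_pos n with h | h
        · subst h; norm_num; exact hf2
        have hn0 : (n : ℂ) ≠ 0 := Nat.cast_ne_zero.2 h.ne'
        have hx1 : (n : ℂ) + 1 ≠ 1 := by
          intro hh; exact hn0 (by linear_combination hh)
        have hxm1 : (n : ℂ) + 1 ≠ -1 := by
          intro hh
          have h2 : ((n + 2 : ℕ) : ℂ) = 0 := by push_cast; linear_combination hh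
          have := Nat.cast_eq_zero.1 h2; omega
        have E := hstep ((n : ℂ) + 1) hx1 hxm1
        rw [show ((n:ℂ) + 1 - 1) = (n:ℂ) by ring] at E
        rw [ih.1, ih.2] at E
        have hE : f ((n:ℂ) + 1 + 1) * (n:ℂ) = ((n:ℂ) + 1 + 1) * (n:ℂ) := by
          linear_combination E
        have := mul_right_cancel₀ hn0 hE
        push_cast
        exact this
    -- integers
    have hint : ∀ m : ℤ, f m = m := by
      intro m
      rcases m with n | n
      · simpa using (hnat n).1
      · have := (hnat (n + 1)).1
        rw [Int.cast_negSucc, hneg]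
        push_cast at this ⊢
        rw [this]
    -- rationals
    have hrat : ∀ q : ℚ, f q = q := by
      intro q
      have hden : ((q.den : ℂ)) ≠ 0 := Nat.cast_ne_zero.2 q.den_nz
      have hm := hmul (q : ℂ) (q.den : ℂ)
      rw [(hnat q.den).1] at hm
      have harg : (q : ℂ) * (q.den : ℂ) = ((q.num : ℤ) : ℂ) := by
        rw [Rat.cast_def]; field_simp
      rw [harg, hint q.num] at hm
      have hgoal : f (q : ℂ) = (q.num : ℂ) / (q.den : ℂ) := by
        rw [eq_div_iff hden]; linear_combination -hm
      rw [hgoal]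
      exact (Rat.cast_def q).symm
    -- reals
    have hreal : ∀ r : ℝ, f r = r := by
      have hfun : (fun r : ℝ => f r) = (fun r : ℝ => (r : ℂ)) :=
        Rat.denseRange_cast.equalizer (hcont.comp Complex.continuous_ofReal)
          Complex.continuous_ofReal
          (by funext q; show f _ = _; rw [Complex.ofReal_ratCast]; exact hrat q)
      intro r; exact congrFun hfun r
    -- imaginary axis
    have him : ∀ b : ℝ, f (b * Complex.I) = b * Complex.I := by
      intro b; rw [hmul, hreal, hfi]
    refine ⟨hreal, ?_⟩
    -- the square identity
    intro z
    rw [← Complex.re_add_im z]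
    set a := z.re with ha
    set b := z.im with hb
    by_cases hb0 : b = 0
    · rw [hb0]; push_cast; rw [zero_mul, add_zero, hreal a]
    by_cases ha0 : a = 0
    · rw [ha0]; push_cast; rw [zero_add, him b]
    have hyne : (b : ℂ) * Complex.I ≠ 0 :=
      mul_ne_zero (Complex.ofReal_ne_zero.2 hb0) Complex.I_ne_zero
    have hw0 : (a : ℂ) - (b : ℂ) * Complex.I ≠ 0 := by
      intro h
      have := congrArg Complex.re h
      simp at this
      exact ha0 this
    have hnexy : (a : ℂ) + (b : ℂ) * Complex.I ≠ (a : ℂ) - (b : ℂ) * Complex.I := by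
      intro h; exact hyne (by linear_combination h / 2)
    have hxyne : (a : ℂ) ≠ (b : ℂ) * Complex.I := by
      intro h
      have := congrArg Complex.im h
      simp at this
      exact hb0 this.symm
    have hA := hFE hxyne
    rw [hreal a, him b] at hA
    have hq := hquot ((a:ℂ) + (b:ℂ) * Complex.I) ((a:ℂ) - (b:ℂ) * Complex.I) hw0 hnexy
    rw [hq] at hA
    have hA' : f ((a:ℂ) + (b:ℂ) * Complex.I) * ((a:ℂ) - (b:ℂ) * Complex.I)
        = ((a:ℂ) + (b:ℂ) * Complex.I) * f ((a:ℂ) - (b:ℂ) * Complex.I) := by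
      have hfw : f ((a:ℂ) - (b:ℂ) * Complex.I) ≠ 0 := hne0 hw0
      exact (div_eq_div_iff hfw hw0).1 hA
    have hm := hmul ((a:ℂ) + (b:ℂ) * Complex.I) ((a:ℂ) - (b:ℂ) * Complex.I)
    have harg2 : ((a:ℂ) + (b:ℂ) * Complex.I) * ((a:ℂ) - (b:ℂ) * Complex.I)
        = ((a^2 + b^2 : ℝ) : ℂ) := by
      push_cast
      linear_combination (-(b:ℂ)^2) * Complex.I_sq
    rw [harg2, hreal] at hm
    -- hm : (a^2+b^2 : ℂ) = f z' * f w
    have key : (f ((a:ℂ) + (b:ℂ) * Complex.I) * f ((a:ℂ) + (b:ℂ) * Complex.I)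
        - ((a:ℂ) + (b:ℂ) * Complex.I) * ((a:ℂ) + (b:ℂ) * Complex.I))
        * ((a:ℂ) - (b:ℂ) * Complex.I) = 0 := by
      push_cast at hm
      linear_combination f ((a:ℂ) + (b:ℂ) * Complex.I) * hA'
        - ((a:ℂ) + (b:ℂ) * Complex.I) * hm + ((a:ℂ)+(b:ℂ)*Complex.I) * ((b:ℂ)^2) * Complex.I_sq
    rcases mul_eq_zero.1 key with h | h
    · linear_combination h
    · exact absurd h hw0
  obtain ⟨hreal, hsq⟩ := hrs
  have hdicho : ∀ z : ℂ, f z = z ∨ f z = -z := by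
    intro z
    have h : (f z - z) * (f z + z) = 0 := by linear_combination hsq z
    rcases mul_eq_zero.1 h with h | h
    · left; linear_combination h
    · right; linear_combination h
  -- quadrant lemma
  have hQ : ∀ s t : ℝ, s = 1 ∨ s = -1 → t = 1 ∨ t = -1 →
      ∀ w : ℂ, 0 < s * w.re → 0 < t * w.im → f w = w := by
    intro s t hs ht w hwre hwim
    set Q : Set ℂ := {w : ℂ | 0 < s * w.re ∧ 0 < t * w.im} with hQdef
    have hwQ : w ∈ Q := ⟨hwre, hwim⟩
    have hQ0 : ∀ p ∈ Q, p ≠ 0 := by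
      rintro p ⟨hp1, _⟩ rfl
      simp at hp1
    have hconv : Convex ℝ Q := by
      rintro p ⟨hp1, hp2⟩ q ⟨hq1, hq2⟩ α β hα hβ hαβ
      have key : ∀ u v : ℝ, 0 < u → 0 < v → 0 < α * u + β * v := by
        intro u v hu hv
        rcases eq_or_lt_of_le hα with h | h
        · have hβ1 : β = 1 := by linarith
          rw [← h, hβ1]; simpa using hv
        · exact add_pos_of_pos_of_nonneg (mul_pos h hu) (mul_nonneg hβ hv.le)
      constructor
      · have : (α • p + β • q).re = α * p.re + β * q.re := by
          simp [Complex.add_re, Complex.smul_re, smul_eq_mul]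
        rw [this]
        have := key (s * p.re) (s * q.re) hp1 hq1
        calc (0:ℝ) < α * (s * p.re) + β * (s * q.re) := this
          _ = s * (α * p.re + β * q.re) := by ring
      · have : (α • p + β • q).im = α * p.im + β * q.im := by
          simp [Complex.add_im, Complex.smul_im, smul_eq_mul]
        rw [this]
        have := key (t * p.im) (t * q.im) hp2 hq2
        calc (0:ℝ) < α * (t * p.im) + β * (t * q.im) := this
          _ = t * (α * p.im + β * q.im) := by ring
    have hpre : IsPreconnected Q := hconv.isPreconnected
    set u : Set ℂ := {p : ℂ | f p ≠ -p} with hudef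
    set v : Set ℂ := {p : ℂ | f p ≠ p} with hvdef
    have hu : IsOpen u := isOpen_ne_fun hcont (continuous_id.neg)
    have hv : IsOpen v := isOpen_ne_fun hcont continuous_id
    have hsub : Q ⊆ u ∪ v := by
      intro p hp
      have hpne : p ≠ -p := by
        intro h
        exact hQ0 p hp (by linear_combination h / 2)
      rcases hdicho p with h | h
      · left; show f p ≠ -p; rw [h]; exact hpne
      · right; show f p ≠ p; rw [h]; exact fun hh => hpne hh.symm
    by_cases hQv : (Q ∩ v).Nonempty
    · by_cases hQu : (Q ∩ u).Nonempty
      · exfalso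
        obtain ⟨p, hpQ, hpu, hpv⟩ := hpre u v hu hv hsub hQu hQv
        rcases hdicho p with h | h
        · exact hpv h
        · exact hpu h
      · -- f = -id on Q
        exfalso
        have hEq : Set.EqOn f (fun p : ℂ => -p) Q := by
          intro p hp
          rcases hdicho p with h | h
          · exfalso
            exact hQu ⟨p, hp, by rw [hudef]; simp only [Set.mem_setOf_eq, h]
                                 intro hh
                                 exact hQ0 p hp (by linear_combination hh / 2)⟩
          · exact h
        have hcl := hEq.closure hcont continuous_neg
        have hsmem : (s : ℂ) ∈ closure Q := by
          have hs2 : s * s = 1 := by rcases hs with h | h <;> rw [h] <;> norm_num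
          have ht2 : t * t = 1 := by rcases ht with h | h <;> rw [h] <;> norm_num
          apply mem_closure_of_tendsto (f := fun n : ℕ =>
            ((s * (1 + 1 / (n + 1)) : ℝ) : ℂ) + ((t * (1 / (n + 1)) : ℝ) : ℂ) * I)
            (b := atTop)
          · have hlim : Tendsto (fun n : ℕ => (1 / (n + 1) : ℝ)) atTop (nhds 0) :=
              tendsto_one_div_add_atTop_nhds_zero_nat
            have hc : Continuous (fun r : ℝ =>
                ((s * (1 + r) : ℝ) : ℂ) + ((t * r : ℝ) : ℂ) * I) := by fun_prop
            have := (hc.tendsto 0).comp hlim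
            simp only [Function.comp_def] at this
            simpa [one_div] using this
          · apply Filter.Eventually.of_forall
            intro n
            have hn : (0:ℝ) < 1 / (n + 1) := by positivity
            constructor
            · show 0 < s * _
              rw [Complex.add_re]
              simp only [Complex.ofReal_re, Complex.mul_re, Complex.I_re, Complex.I_im,
                Complex.ofReal_im]
              have : s * (s * (1 + 1 / (↑n + 1)) + (t * (1 / (↑n + 1)) * 0 - 0 * 1))
                  = (s * s) * (1 + 1 / (↑n + 1)) := by ring
              rw [this, hs2]
              nlinarith
            · show 0 < t * _
              rw [Complex.add_im]
              simp only [Complex.ofReal_im, Complex.mul_im, Complex.I_re, Complex.I_im,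
                Complex.ofReal_re]
              have : t * (0 + (t * (1 / (↑n + 1)) * 1 + 0 * 0))
                  = (t * t) * (1 / (↑n + 1)) := by ring
              rw [this, ht2]
              linarith
        have := hcl hsmem
        simp only at this
        rw [hreal s] at this
        have hs0 : (s : ℂ) = 0 := by linear_combination this / 2
        rcases hs with h | h <;> rw [h] at hs0 <;> norm_num at hs0
    · -- Q ∩ v empty : f w = w
      rcases hdicho w with h | h
      · exact h
      · exfalso
        apply hQv
        refine ⟨w, hwQ, ?_⟩
        rw [hvdef]
        simp only [Set.mem_setOf_eq, h]
        intro hh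
        exact hQ0 w hwQ (by linear_combination -hh / 2)
  -- points off the axes
  have hD : ∀ w : ℂ, w.re ≠ 0 → w.im ≠ 0 → f w = w := by
    intro w h1 h2
    rcases h1.lt_or_gt with h | h <;> rcases h2.lt_or_gt with h' | h'
    · exact hQ (-1) (-1) (Or.inr rfl) (Or.inr rfl) w (by linarith) (by linarith)
    · exact hQ (-1) 1 (Or.inr rfl) (Or.inl rfl) w (by linarith) (by linarith)
    · exact hQ 1 (-1) (Or.inl rfl) (Or.inr rfl) w (by linarith) (by linarith)
    · exact hQ 1 1 (Or.inl rfl) (Or.inl rfl) w (by linarith) (by linarith)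
  -- final limiting argument
  intro z
  set g : ℕ → ℂ := fun n => z + ((1 / (n + 1) : ℝ) : ℂ) * (1 + I) with hgdef
  have hlim : Tendsto (fun n : ℕ => (1 / (n + 1) : ℝ)) atTop (nhds 0) :=
    tendsto_one_div_add_atTop_nhds_zero_nat
  have htend : Tendsto g atTop (nhds z) := by
    have hc : Continuous (fun r : ℝ => z + (r : ℂ) * (1 + I)) := by fun_prop
    have := (hc.tendsto 0).comp hlim
    simp only [Function.comp_def] at this
    simpa [one_div, hgdef] using this
  have hre : ∀ n : ℕ, (g n).re = z.re + 1 / (n + 1) := by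
    intro n
    show (z + _ * _).re = _
    rw [Complex.add_re, Complex.mul_re, Complex.ofReal_re, Complex.ofReal_im]
    norm_num
  have him : ∀ n : ℕ, (g n).im = z.im + 1 / (n + 1) := by
    intro n
    show (z + _ * _).im = _
    rw [Complex.add_im, Complex.mul_im, Complex.ofReal_re, Complex.ofReal_im]
    norm_num
  have hev : ∀ᶠ n in atTop, f (g n) = g n := by
    have hevre : ∀ᶠ n in atTop, (g n).re ≠ 0 := by
      by_cases hz : z.re = 0
      · apply Filter.Eventually.of_forall
        intro n
        rw [hre n, hz, zero_add]
        positivity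
      · have : Tendsto (fun n => (g n).re) atTop (nhds z.re) :=
          (Complex.continuous_re.tendsto z).comp htend
        exact this.eventually_ne hz
    have hevim : ∀ᶠ n in atTop, (g n).im ≠ 0 := by
      by_cases hz : z.im = 0
      · apply Filter.Eventually.of_forall
        intro n
        rw [him n, hz, zero_add]
        positivity
      · have : Tendsto (fun n => (g n).im) atTop (nhds z.im) :=
          (Complex.continuous_im.tendsto z).comp htend
        exact this.eventually_ne hz
    filter_upwards [hevre, hevim] with n h1 h2
    exact hD (g n) h1 h2
  have h1 : Tendsto (fun n => f (g n)) atTop (nhds (f z)) :=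
    (hcont.tendsto z).comp htend
  have h2 : Tendsto (fun n => f (g n)) atTop (nhds z) :=
    htend.congr' (hev.mono fun n h => h.symm)
  exact tendsto_nhds_unique h1 h2

theorem continuous_sd_map_complex (f : ℂ → ℂ) (hf : IsSDMap f) (hcont : Continuous f) :
    (∀ z : ℂ, f z = z) ∨ (∀ z : ℂ, f z = (starRingEnd ℂ) z) := by
  have hI2 : f Complex.I * f Complex.I = -1 := sd_I_sq hf
  have hcases : f Complex.I = Complex.I ∨ f Complex.I = -Complex.I := by
    have h : (f Complex.I - Complex.I) * (f Complex.I + Complex.I) = 0 := by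
      linear_combination hI2 - Complex.I_sq
    rcases mul_eq_zero.1 h with h | h
    · left; linear_combination h
    · right; linear_combination h
  rcases hcases with h | h
  · left; exact sd_id hf hcont h
  · right
    have hgsd : IsSDMap (fun z => (starRingEnd ℂ) (f z)) := by
      intro x y hxy
      obtain ⟨h1, h2⟩ := hf hxy
      constructor
      · intro hh; exact h1 ((starRingEnd ℂ).injective hh)
      · show (starRingEnd ℂ) (f _) = _
        rw [h2, map_div₀, map_add, map_sub]
    have hgc : Continuous (fun z => (starRingEnd ℂ) (f z)) :=
      Complex.continuous_conj.comp hcont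
    have hgi : (starRingEnd ℂ) (f Complex.I) = Complex.I := by rw [h]; simp
    intro z
    have h2 := sd_id hgsd hgc hgi z
    have h3 : (starRingEnd ℂ) ((starRingEnd ℂ) (f z)) = (starRingEnd ℂ) z :=
      congrArg _ h2
    rwa [Complex.conj_conj] at h3
end
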